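/- Let N ≥ 1, and for k = 1,…,N let b_k > 0 and σ_k > 0; set γ_k = σ_k²/b_k², τ⁻ = ∏_{k=1}^N γ_k/(1+γ_k), b̄ = (1/N)∑_{k=1}^N b_k, and φ_α(t) = ln τ⁻ + N t (b̄ − α) + ∑_{k=1}^N ln(1 + γ_k^{−1} e^{−t b_k (1+γ_k)}) for t ≥ 0. Suppose 0 < α < min_k b_k, and for each k set t^{(k)}_α = (1/(b_k(1+γ_k))) · ln((α + b_k γ_k)/(γ_k (b_k − α))). Then φ_α attains its infimum over [0,∞) at a unique point t*_α, and min_k t^{(k)}_α ≤ t*_α ≤ max_k t^{(k)}_α; moreover t*_α ≤ −ln(τ⁻) / (N (b̄ − α)). -/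

import Mathlib

open Real Finset

/-- `γ k = σ k ^ 2 / b k ^ 2`. -/
noncomputable def bennettGamma {N : ℕ} (b σ : Fin N → ℝ) (k : Fin N) : ℝ :=
  (σ k) ^ 2 / (b k) ^ 2

/-- `b̄ = (1/N) ∑ b k`. -/
noncomputable def bennettBbar {N : ℕ} (b : Fin N → ℝ) : ℝ :=
  (∑ k, b k) / N

/-- `τ⁻ = ∏ γ k / (1 + γ k)`. -/
noncomputable def bennettTauMinus {N : ℕ} (b σ : Fin N → ℝ) : ℝ :=
  ∏ k, bennettGamma b σ k / (1 + bennettGamma b σ k)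

/-- The function `φ_α(t)` of the paper. -/
noncomputable def bennettPhi {N : ℕ} (b σ : Fin N → ℝ) (α t : ℝ) : ℝ :=
  Real.log (bennettTauMinus b σ) + N * t * (bennettBbar b - α) +
    ∑ k, Real.log (1 + (bennettGamma b σ k)⁻¹ *
      Real.exp (-(t * b k * (1 + bennettGamma b σ k))))

/-- `t^{(k)}_α`, the minimizer of the `k`-th term of `φ_α`. -/
noncomputable def bennettTk {N : ℕ} (b σ : Fin N → ℝ) (α : ℝ) (k : Fin N) : ℝ :=
  (1 / (b k * (1 + bennettGamma b σ k))) *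
    Real.log ((α + b k * bennettGamma b σ k) / (bennettGamma b σ k * (b k - α)))

lemma bennett_gamma_pos {N : ℕ} (b σ : Fin N → ℝ) (hb : ∀ k, 0 < b k) (hσ : ∀ k, 0 < σ k)
    (k : Fin N) : 0 < bennettGamma b σ k :=
  div_pos (pow_pos (hσ k) 2) (pow_pos (hb k) 2)

lemma bennett_hasDerivAt {N : ℕ} (b σ : Fin N → ℝ) (hb : ∀ k, 0 < b k) (hσ : ∀ k, 0 < σ k)
    (α t : ℝ) :
    HasDerivAt (bennettPhi b σ α)
      ((N : ℝ) * (bennettBbar b - α) - ∑ k, (b k * (1 + bennettGamma b σ k)) /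
        (1 + bennettGamma b σ k * Real.exp (b k * (1 + bennettGamma b σ k) * t))) t := by
  set γ := bennettGamma b σ with hγdef
  have hγ : ∀ k, 0 < γ k := bennett_gamma_pos b σ hb hσ
  have h1 : HasDerivAt (fun t : ℝ => Real.log (bennettTauMinus b σ) + ↑N * t * (bennettBbar b - α))
      ((N : ℝ) * (bennettBbar b - α)) t := by
    simpa using (((hasDerivAt_id t).const_mul (N : ℝ)).mul_const (bennettBbar b - α)).const_add
      (Real.log (bennettTauMinus b σ))
  have h2 : ∀ k : Fin N, HasDerivAt
      (fun t : ℝ => Real.log (1 + (γ k)⁻¹ * Real.exp (-(t * b k * (1 + γ k)))))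
      (-((b k * (1 + γ k)) / (1 + γ k * Real.exp (b k * (1 + γ k) * t)))) t := by
    intro k
    have hinner : HasDerivAt (fun t : ℝ => -(t * b k * (1 + γ k))) (-(b k * (1 + γ k))) t := by
      simpa using (((hasDerivAt_id t).mul_const (b k)).mul_const (1 + γ k)).fun_neg
    have h3 := ((hinner.exp.const_mul ((γ k)⁻¹)).const_add 1)
    have hγk := hγ k
    have hpos : 0 < 1 + (γ k)⁻¹ * Real.exp (-(t * b k * (1 + γ k))) := by positivity
    have h4 := h3.log (ne_of_gt hpos)
    convert h4 using 1
    have hE : Real.exp (-(t * b k * (1 + γ k))) = (Real.exp (b k * (1 + γ k) * t))⁻¹ := by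
      rw [← Real.exp_neg]; ring_nf
    have hEpos := Real.exp_pos (b k * (1 + γ k) * t)
    rw [hE]
    field_simp [ne_of_gt hγk]
    ring
  have hsum : HasDerivAt (fun t : ℝ => ∑ k, Real.log (1 + (γ k)⁻¹ *
        Real.exp (-(t * b k * (1 + γ k)))))
      (∑ k, -((b k * (1 + γ k)) / (1 + γ k * Real.exp (b k * (1 + γ k) * t)))) t :=
    HasDerivAt.fun_sum (fun k _ => h2 k)
  have h5 := h1.add hsum
  rw [show ((N : ℝ) * (bennettBbar b - α) - ∑ k, (b k * (1 + γ k)) /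
        (1 + γ k * Real.exp (b k * (1 + γ k) * t))) =
      ((N : ℝ) * (bennettBbar b - α) + ∑ k, -((b k * (1 + γ k)) /
        (1 + γ k * Real.exp (b k * (1 + γ k) * t)))) from by
    rw [Finset.sum_neg_distrib]; ring]
  exact h5

lemma bennett_term_lt {c γ : ℝ} (hc : 0 < c) (hγ : 0 < γ) {s t : ℝ} (hst : s < t) :
    c / (1 + γ * Real.exp (c * t)) < c / (1 + γ * Real.exp (c * s)) :=
  div_lt_div_of_pos_left hc (by positivity)
    (add_lt_add_right (mul_lt_mul_of_pos_left
      (Real.exp_lt_exp.mpr (mul_lt_mul_of_pos_left hst hc)) hγ) 1)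

lemma bennett_exp_tk {N : ℕ} (b σ : Fin N → ℝ) (hb : ∀ k, 0 < b k) (hσ : ∀ k, 0 < σ k)
    {α : ℝ} (hα : 0 < α) (k : Fin N) (hαk : α < b k) :
    Real.exp (b k * (1 + bennettGamma b σ k) * bennettTk b σ α k) =
      (α + b k * bennettGamma b σ k) / (bennettGamma b σ k * (b k - α)) := by
  have hγk := bennett_gamma_pos b σ hb hσ k
  have hbk := hb k
  have hc : b k * (1 + bennettGamma b σ k) ≠ 0 := by positivity
  have hr : 0 < (α + b k * bennettGamma b σ k) / (bennettGamma b σ k * (b k - α)) := by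
    apply div_pos (by positivity) (by nlinarith)
  rw [bennettTk, show b k * (1 + bennettGamma b σ k) *
      ((1 / (b k * (1 + bennettGamma b σ k))) *
        Real.log ((α + b k * bennettGamma b σ k) / (bennettGamma b σ k * (b k - α)))) =
      Real.log ((α + b k * bennettGamma b σ k) / (bennettGamma b σ k * (b k - α))) from by
    field_simp]
  exact Real.exp_log hr

lemma bennett_term_tk {N : ℕ} (b σ : Fin N → ℝ) (hb : ∀ k, 0 < b k) (hσ : ∀ k, 0 < σ k)
    {α : ℝ} (hα : 0 < α) (k : Fin N) (hαk : α < b k) :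
    (b k * (1 + bennettGamma b σ k)) /
      (1 + bennettGamma b σ k * Real.exp (b k * (1 + bennettGamma b σ k) *
        bennettTk b σ α k)) = b k - α := by
  rw [bennett_exp_tk b σ hb hσ hα k hαk]
  have hγk := bennett_gamma_pos b σ hb hσ k
  have hbk := hb k
  have hbα : 0 < b k - α := by linarith
  rw [show (1 + bennettGamma b σ k * ((α + b k * bennettGamma b σ k) /
      (bennettGamma b σ k * (b k - α)))) = b k * (1 + bennettGamma b σ k) / (b k - α) from by
    field_simp; ring]
  rw [div_div_eq_mul_div]
  field_simp

lemma bennett_tk_pos {N : ℕ} (b σ : Fin N → ℝ) (hb : ∀ k, 0 < b k) (hσ : ∀ k, 0 < σ k)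
    {α : ℝ} (hα : 0 < α) (k : Fin N) (hαk : α < b k) : 0 < bennettTk b σ α k := by
  have hγk := bennett_gamma_pos b σ hb hσ k
  have hbk := hb k
  apply mul_pos (by positivity)
  apply Real.log_pos
  rw [lt_div_iff₀ (by nlinarith)]
  nlinarith

/-- Lemma 3 (ii) of the paper: for `0 < α < min_k b_k`, the function `φ_α` attains its
infimum over `[0,∞)` at a unique point `t*_α`, which lies between `min_k t^{(k)}_α`
and `max_k t^{(k)}_α`, and satisfies `t*_α ≤ -ln(τ⁻)/(N (b̄ - α))`. -/
theorem bennettPhi_minimizer_location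
    (N : ℕ) (hN : 1 ≤ N)
    (hne : (Finset.univ : Finset (Fin N)).Nonempty)
    (b σ : Fin N → ℝ) (hb : ∀ k, 0 < b k) (hσ : ∀ k, 0 < σ k)
    (α : ℝ) (hα : 0 < α) (hαb : α < Finset.univ.inf' hne b) :
    ∃ tstar : ℝ,
      (0 ≤ tstar ∧ IsMinOn (bennettPhi b σ α) (Set.Ici 0) tstar) ∧
      (∀ s : ℝ, 0 ≤ s → IsMinOn (bennettPhi b σ α) (Set.Ici 0) s → s = tstar) ∧
      Finset.univ.inf' hne (bennettTk b σ α) ≤ tstar ∧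
      tstar ≤ Finset.univ.sup' hne (bennettTk b σ α) ∧
      tstar ≤ -Real.log (bennettTauMinus b σ) / (N * (bennettBbar b - α)) := by
  have hγ : ∀ k, 0 < bennettGamma b σ k := bennett_gamma_pos b σ hb hσ
  have hαk : ∀ k, α < b k := fun k => lt_of_lt_of_le hαb (Finset.inf'_le _ (mem_univ k))
  have hNpos : (0 : ℝ) < N := by exact_mod_cast hN
  -- b̄ - α > 0
  have hBα : 0 < bennettBbar b - α := by
    have hsum : (N : ℝ) * α < ∑ k, b k := by
      calc (N : ℝ) * α = ∑ _k : Fin N, α := by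
            rw [Finset.sum_const, card_univ, Fintype.card_fin, nsmul_eq_mul]
        _ < ∑ k, b k := Finset.sum_lt_sum_of_nonempty hne fun k _ => hαk k
    rw [bennettBbar, sub_pos, lt_div_iff₀ hNpos]
    linarith
  have hNBα : 0 < (N : ℝ) * (bennettBbar b - α) := mul_pos hNpos hBα
  -- the derivative function D
  set D : ℝ → ℝ := fun t => (N : ℝ) * (bennettBbar b - α) - ∑ k, (b k * (1 + bennettGamma b σ k)) /
      (1 + bennettGamma b σ k * Real.exp (b k * (1 + bennettGamma b σ k) * t)) with hDdef
  have hderiv : ∀ t, HasDerivAt (bennettPhi b σ α) (D t) t :=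
    fun t => bennett_hasDerivAt b σ hb hσ α t
  have hdiff : Differentiable ℝ (bennettPhi b σ α) := fun t => (hderiv t).differentiableAt
  have hcont : Continuous (bennettPhi b σ α) := hdiff.continuous
  have hderiv' : deriv (bennettPhi b σ α) = D := funext fun t => (hderiv t).deriv
  -- N (b̄ - α) = ∑ (b k - α)
  have hNB_sum : (N : ℝ) * (bennettBbar b - α) = ∑ k, (b k - α) := by
    rw [Finset.sum_sub_distrib, Finset.sum_const, card_univ, Fintype.card_fin, nsmul_eq_mul,
      bennettBbar]
    field_simp
  -- sign of D relative to the t_k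
  have hDneg : ∀ x, (∀ k, x < bennettTk b σ α k) → D x < 0 := by
    intro x hx
    rw [hDdef]
    simp only
    rw [hNB_sum, sub_neg]
    apply Finset.sum_lt_sum_of_nonempty hne
    intro k _
    calc b k - α = (b k * (1 + bennettGamma b σ k)) /
          (1 + bennettGamma b σ k * Real.exp (b k * (1 + bennettGamma b σ k) *
            bennettTk b σ α k)) := (bennett_term_tk b σ hb hσ hα k (hαk k)).symm
      _ < _ := bennett_term_lt (by have := hγ k; have := hb k; positivity) (hγ k) (hx k)
  have hDpos : ∀ x, (∀ k, bennettTk b σ α k < x) → 0 < D x := by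
    intro x hx
    rw [hDdef]
    simp only
    rw [hNB_sum, sub_pos]
    apply Finset.sum_lt_sum_of_nonempty hne
    intro k _
    calc (b k * (1 + bennettGamma b σ k)) /
          (1 + bennettGamma b σ k * Real.exp (b k * (1 + bennettGamma b σ k) * x))
        < (b k * (1 + bennettGamma b σ k)) /
          (1 + bennettGamma b σ k * Real.exp (b k * (1 + bennettGamma b σ k) *
            bennettTk b σ α k)) :=
          bennett_term_lt (by have := hγ k; have := hb k; positivity) (hγ k) (hx k)
      _ = b k - α := bennett_term_tk b σ hb hσ hα k (hαk k)
  -- D is strictly monotone, hence φ is strictly convex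
  have hDmono : StrictMono D := by
    intro s t hst
    rw [hDdef]
    simp only
    apply sub_lt_sub_left
    apply Finset.sum_lt_sum_of_nonempty hne
    intro k _
    exact bennett_term_lt (by have := hγ k; have := hb k; positivity) (hγ k) hst
  have hconv : StrictConvexOn ℝ (Set.Ici (0:ℝ)) (bennettPhi b σ α) := by
    apply StrictMonoOn.strictConvexOn_of_deriv (convex_Ici 0) hcont.continuousOn
    rw [hderiv']
    exact hDmono.strictMonoOn _
  -- φ 0 = 0
  have hphi0 : bennettPhi b σ α 0 = 0 := by
    have hfac : ∀ k : Fin N, bennettGamma b σ k / (1 + bennettGamma b σ k) ≠ 0 := by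
      intro k; have := hγ k; positivity
    have hterm : ∀ k : Fin N, Real.log (bennettGamma b σ k / (1 + bennettGamma b σ k)) +
        Real.log (1 + (bennettGamma b σ k)⁻¹) = 0 := by
      intro k
      have hγk := hγ k
      rw [← Real.log_mul (hfac k) (by positivity),
        show bennettGamma b σ k / (1 + bennettGamma b σ k) * (1 + (bennettGamma b σ k)⁻¹) = 1
          from by field_simp; ring, Real.log_one]
    rw [bennettPhi, bennettTauMinus, Real.log_prod (fun k _ => hfac k)]
    simp only [mul_zero, zero_mul, neg_zero, Real.exp_zero, mul_one, add_zero]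
    rw [← Finset.sum_add_distrib]
    simp [hterm]
  -- lower bound on φ
  have hlow : ∀ t : ℝ, Real.log (bennettTauMinus b σ) + (N : ℝ) * t * (bennettBbar b - α)
      ≤ bennettPhi b σ α t := by
    intro t
    rw [bennettPhi]
    apply le_add_of_nonneg_right
    apply Finset.sum_nonneg
    intro k _
    apply Real.log_nonneg
    have := hγ k
    have : 0 ≤ (bennettGamma b σ k)⁻¹ * Real.exp (-(t * b k * (1 + bennettGamma b σ k))) := by
      positivity
    linarith
  -- log τ⁻ ≤ 0
  have hlogτ : Real.log (bennettTauMinus b σ) ≤ 0 := by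
    apply Real.log_nonpos
    · apply le_of_lt; apply Finset.prod_pos; intro k _; have := hγ k; positivity
    · apply Finset.prod_le_one
      · intro k _; have := hγ k; positivity
      · intro k _; have := hγ k
        rw [div_le_one (by linarith)]; linarith
  set T : ℝ := -Real.log (bennettTauMinus b σ) / ((N : ℝ) * (bennettBbar b - α)) with hTdef
  have hT0 : 0 ≤ T := div_nonneg (by linarith) hNBα.le
  -- beyond T, φ exceeds φ 0
  have htail : ∀ t : ℝ, T < t → bennettPhi b σ α 0 < bennettPhi b σ α t := by
    intro t ht
    rw [hphi0]
    have h1 : Real.log (bennettTauMinus b σ) + (N : ℝ) * T * (bennettBbar b - α) = 0 := by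
      rw [hTdef]
      field_simp
      ring
    have h2 : (N : ℝ) * T * (bennettBbar b - α) < (N : ℝ) * t * (bennettBbar b - α) := by
      have : T * ((N : ℝ) * (bennettBbar b - α)) < t * ((N : ℝ) * (bennettBbar b - α)) :=
        mul_lt_mul_of_pos_right ht hNBα
      linarith [this]
    linarith [hlow t]
  -- existence of the minimizer on [0, T]
  obtain ⟨tstar, hts_mem, hts_min⟩ := (isCompact_Icc (a := (0:ℝ)) (b := T)).exists_isMinOn
    ⟨0, Set.left_mem_Icc.mpr hT0⟩ hcont.continuousOn
  have hts_min' := isMinOn_iff.mp hts_min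
  have hmin : IsMinOn (bennettPhi b σ α) (Set.Ici 0) tstar := by
    rw [isMinOn_iff]
    intro y hy
    by_cases hyT : y ≤ T
    · exact hts_min' y ⟨hy, hyT⟩
    · calc bennettPhi b σ α tstar ≤ bennettPhi b σ α 0 :=
            hts_min' 0 (Set.left_mem_Icc.mpr hT0)
        _ ≤ bennettPhi b σ α y := (htail y (not_le.mp hyT)).le
  have hts0 : (0:ℝ) ≤ tstar := hts_mem.1
  refine ⟨tstar, ⟨hts0, hmin⟩, ?_, ?_, ?_, hts_mem.2⟩
  · intro s hs hsmin
    exact hconv.eq_of_isMinOn hsmin hmin hs hts0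
  · -- lower bound by min t_k
    by_contra hcon
    push_neg at hcon
    set m := Finset.univ.inf' hne (bennettTk b σ α) with hmdef
    have hm_pos : 0 < m := by
      rw [hmdef, Finset.lt_inf'_iff]
      exact fun k _ => bennett_tk_pos b σ hb hσ hα k (hαk k)
    have hanti : StrictAntiOn (bennettPhi b σ α) (Set.Icc tstar m) := by
      apply strictAntiOn_of_deriv_neg (convex_Icc _ _) hcont.continuousOn
      intro x hx
      rw [interior_Icc] at hx
      rw [hderiv']
      apply hDneg
      intro k
      exact lt_of_lt_of_le hx.2 (Finset.inf'_le _ (mem_univ k))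
    have : bennettPhi b σ α m < bennettPhi b σ α tstar :=
      hanti ⟨le_refl _, hcon.le⟩ ⟨hcon.le, le_refl _⟩ hcon
    exact absurd (isMinOn_iff.mp hmin m hm_pos.le) (by linarith)
  · -- upper bound by max t_k
    by_contra hcon
    push_neg at hcon
    set M := Finset.univ.sup' hne (bennettTk b σ α) with hMdef
    have hM_pos : 0 < M := by
      obtain ⟨k, -⟩ := hne.exists_mem
      exact lt_of_lt_of_le (bennett_tk_pos b σ hb hσ hα k (hαk k))
        (Finset.le_sup' _ (mem_univ k))
    have hmono : StrictMonoOn (bennettPhi b σ α) (Set.Icc M tstar) := by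
      apply strictMonoOn_of_deriv_pos (convex_Icc _ _) hcont.continuousOn
      intro x hx
      rw [interior_Icc] at hx
      rw [hderiv']
      apply hDpos
      intro k
      exact lt_of_le_of_lt (Finset.le_sup' _ (mem_univ k)) hx.1
    have : bennettPhi b σ α M < bennettPhi b σ α tstar :=
      hmono ⟨le_refl _, hcon.le⟩ ⟨hcon.le, le_refl _⟩ hcon
    exact absurd (isMinOn_iff.mp hmin M hM_pos.le) (by linarith)
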